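/- Monotonicity of the self-similar Lyapunov functional: with ψ(s,y) as above supported in {|y| ≤ 1}, define Ẽ(s) = (1/2) ∫_{B₁} [ |∂_s ψ|² + |∇_y ψ|² − |y·∇_y ψ|² ] (1−|y|²)^{−1/2} dy. Then for 0 ≤ s₁ < s₂ one has Ẽ(s₂) − Ẽ(s₁) = ∫_{s₁}^{s₂} ∫_{B₁} |∂_s ψ|² (1−|y|²)^{−3/2} dy ds; in particular Ẽ is non-decreasing. -/

import Mathlib

/-! Pointwise in `y`, the `s`-derivative of the Lyapunov density is `2 ρ (⟨∂ₛψ, ∂ₛ²ψ⟩ +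
⟨∇ψ, ∇∂ₛψ⟩ − (y·∇ψ)(y·∇∂ₛψ))`. Testing the equation against `∂ₛψ` (its normal term drops out,
since `|ψ| = 1` forces `ψ ⟂ ∂ₛψ`) and using `∇ρ = ρ³ y`, `ρ²(1 − |y|²) = 1`, half of this
derivative becomes `div J + ρ³ |∂ₛψ|²` for the current
`Jᵢ = ⟨ρ ∂ᵢψ − ρ yᵢ (y·∇ψ) − ρ yᵢ ∂ₛψ, ∂ₛψ⟩`. As `∂ψ` vanishes near `|y| = 1`, `J` has compact
support in the ball and `∫ div J = 0`. Integrating the pointwise identity in `s` and exchanging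
the `s`- and `y`-integrals (Fubini) gives the claim. -/

open MeasureTheory
open scoped RealInnerProductSpace

noncomputable section

abbrev E2 : Type := EuclideanSpace ℝ (Fin 2)
abbrev Em (m : ℕ) : Type := EuclideanSpace ℝ (Fin (m+1))

noncomputable def ptD {F : Type*} [NormedAddCommGroup F] [NormedSpace ℝ F]
    (u : ℝ × E2 → F) (p : ℝ × E2) : F :=
  fderiv ℝ u p (1, 0)

noncomputable def pxD {F : Type*} [NormedAddCommGroup F] [NormedSpace ℝ F]
    (i : Fin 2) (u : ℝ × E2 → F) (p : ℝ × E2) : F :=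
  fderiv ℝ u p (0, EuclideanSpace.single i (1:ℝ))

noncomputable def boxD {F : Type*} [NormedAddCommGroup F] [NormedSpace ℝ F]
    (u : ℝ × E2 → F) (p : ℝ × E2) : F :=
  -(ptD (fun q => ptD u q) p) + ∑ i : Fin 2, pxD i (fun q => pxD i u q) p

noncomputable def nullf (m : ℕ) (φ : ℝ × E2 → Em m) (p : ℝ × E2) : ℝ :=
  -⟪ptD φ p, ptD φ p⟫ + ∑ i : Fin 2, ⟪pxD i φ p, pxD i φ p⟫

noncomputable def eden (m : ℕ) (φ : ℝ × E2 → Em m) (t : ℝ) (x : E2) : ℝ :=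
  ‖ptD φ (t, x)‖^2 + ∑ i : Fin 2, ‖pxD i φ (t, x)‖^2

/-- The self-similar weight `ρ(y) = (1−|y|²)^{−1/2}`. -/
noncomputable def rho (y : E2) : ℝ := (1 - ‖y‖^2) ^ (-(1/2) : ℝ)

/-- The self-similar Lyapunov functional
`Ẽ(s) = (1/2)∫_{B₁} [|∂_sψ|² + |∇_yψ|² − |y·∇_yψ|²](1−|y|²)^{−1/2} dy`. -/
noncomputable def lyap (m : ℕ) (ψf : ℝ × E2 → Em m) (s : ℝ) : ℝ :=
  (1/2 : ℝ) * ∫ y in Metric.ball (0:E2) 1,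
    (‖ptD ψf (s, y)‖^2 + ∑ i : Fin 2, ‖pxD i ψf (s, y)‖^2
      - ‖∑ i : Fin 2, y i • pxD i ψf (s, y)‖^2) * rho y

/-- The flux density `∫_{B₁} |∂_sψ|² (1−|y|²)^{−3/2} dy`. -/
noncomputable def fluxDen (m : ℕ) (ψf : ℝ × E2 → Em m) (s : ℝ) : ℝ :=
  ∫ y in Metric.ball (0:E2) 1, ‖ptD ψf (s, y)‖^2 * (1 - ‖y‖^2) ^ (-(3/2) : ℝ)

open Set Filter Topology Metric
open scoped ContDiff

section CompactSupport

variable {E F : Type*} [NormedAddCommGroup E] [NormedAddCommGroup F] {r R : ℝ}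

theorem eventuallyEq_zero_of_lt_norm {f : E → F} (hf : ∀ z, r ≤ ‖z‖ → f z = 0) {y : E}
    (hy : r < ‖y‖) : f =ᶠ[𝓝 y] 0 := by
  filter_upwards [(isOpen_lt continuous_const continuous_norm).mem_nhds hy] with z hz
  exact hf z (le_of_lt hz)

theorem hasCompactSupport_of_eq_zero_of_le_norm [ProperSpace E] {f : E → F}
    (h0 : ∀ z, r ≤ ‖z‖ → f z = 0) : HasCompactSupport f :=
  HasCompactSupport.intro (isCompact_closedBall 0 r) fun z hz =>
    h0 z (le_of_lt (by simpa using hz))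

theorem integrableOn_ball_of_continuousOn [ProperSpace E] [MeasurableSpace E]
    [OpensMeasurableSpace E]
    {μ : Measure E} [IsFiniteMeasureOnCompacts μ] {f : E → F} (hrR : r < R)
    (hf : ContinuousOn f (ball 0 R)) (h0 : ∀ y, r ≤ ‖y‖ → f y = 0) :
    IntegrableOn f (ball 0 R) μ :=
  ((hf.mono (closedBall_subset_ball hrR)).integrableOn_compact (isCompact_closedBall 0 r))
    |>.of_forall_sdiff_eq_zero measurableSet_ball fun y hy =>
      h0 y (le_of_lt (by simpa using hy.2))

theorem integrableOn_Ioc_prod_ball_of_continuousOn [ProperSpace E] [MeasurableSpace E]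
    [OpensMeasurableSpace E] {μ : Measure E} [IsFiniteMeasureOnCompacts μ]
    {f : ℝ × E → F} {a b : ℝ} (hrR : r < R) (hf : ContinuousOn f (Icc a b ×ˢ ball 0 R))
    (h0 : ∀ s ∈ Icc a b, ∀ y, r ≤ ‖y‖ → f (s, y) = 0) :
    IntegrableOn f (Ioc a b ×ˢ ball 0 R) (volume.prod μ) := by
  refine ((hf.mono (prod_mono subset_rfl (closedBall_subset_ball hrR))).integrableOn_compact
    (isCompact_Icc.prod (isCompact_closedBall 0 r))).of_forall_sdiff_eq_zero
    (measurableSet_Ioc.prod measurableSet_ball) fun p hp => ?_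
  have hs : p.1 ∈ Icc a b := Ioc_subset_Icc_self hp.1.1
  exact h0 p.1 hs p.2 (le_of_lt (by simpa [hs] using hp.2))

variable [NormedSpace ℝ E] [NormedSpace ℝ F]

theorem fderiv_eq_zero_of_lt_norm {f : E → F} (hf : ∀ z, r ≤ ‖z‖ → f z = 0) {y : E}
    (hy : r < ‖y‖) : fderiv ℝ f y = 0 := by
  rw [(eventuallyEq_zero_of_lt_norm hf hy).fderiv_eq]
  exact fderiv_const_apply 0

theorem contDiff_of_contDiffAt_of_eq_zero_of_le_norm {f : E → F} {n : WithTop ℕ∞}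
    (hrR : r < R) (hf : ∀ y, ‖y‖ < R → ContDiffAt ℝ n f y) (h0 : ∀ z, r ≤ ‖z‖ → f z = 0) :
    ContDiff ℝ n f :=
  contDiff_iff_contDiffAt.2 fun y => (lt_or_ge ‖y‖ R).elim (hf y) fun hy =>
    contDiffAt_const.congr_of_eventuallyEq (eventuallyEq_zero_of_lt_norm h0 (hrR.trans_le hy))

theorem integral_fderiv_apply_eq_zero [FiniteDimensional ℝ E] [MeasurableSpace E] [BorelSpace E]
    {μ : Measure E} [μ.IsAddHaarMeasure] {h : E → ℝ} (hh : ContDiff ℝ 1 h)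
    (hc : HasCompactSupport h) (v : E) : ∫ x, fderiv ℝ h x v ∂μ = 0 := by
  have hderiv : Integrable (fun x => fderiv ℝ h x v) μ :=
    ((hh.continuous_fderiv one_ne_zero).clm_apply continuous_const).integrable_of_hasCompactSupport
      (hc.fderiv_apply (𝕜 := ℝ) v)
  simpa using integral_mul_fderiv_eq_neg_fderiv_mul_of_integrable (μ := μ)
    (f := fun _ => (1 : ℝ)) (g := h) (v := v) (by simp) (by simpa using hderiv)
    (by simpa using hh.continuous.integrable_of_hasCompactSupport hc)
    (fun x _ => differentiableAt_const 1) (fun x _ => hh.differentiable one_ne_zero x)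

end CompactSupport

section Calculus

variable {X E F : Type*} [NormedAddCommGroup X] [NormedSpace ℝ X] [NormedAddCommGroup E]
  [NormedSpace ℝ E] [NormedAddCommGroup F] [NormedSpace ℝ F]

theorem fderiv_fderiv_apply_comm {u : X → F} (hu : ContDiff ℝ 2 u) (p v w : X) :
    fderiv ℝ (fun q => fderiv ℝ u q v) p w = fderiv ℝ (fun q => fderiv ℝ u q w) p v := by
  have hd : DifferentiableAt ℝ (fderiv ℝ u) p :=
    (hu.fderiv_right (m := 1) le_rfl).differentiable one_ne_zero p
  have happly (v : X) :
      fderiv ℝ (fun q => fderiv ℝ u q v) p = (fderiv ℝ (fderiv ℝ u) p).flip v := by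
    simp [fderiv_clm_apply hd (differentiableAt_const v)]
  simp only [happly, ContinuousLinearMap.flip_apply]
  exact hu.contDiffAt.isSymmSndFDerivAt (by simp) w v

theorem DifferentiableAt.hasFDerivAt_slice_snd {u : ℝ × E → F} {s : ℝ} {y : E}
    (hu : DifferentiableAt ℝ u (s, y)) :
    HasFDerivAt (fun z => u (s, z)) ((fderiv ℝ u (s, y)).comp (.inr ℝ ℝ E)) y :=
  hu.hasFDerivAt.comp y (hasFDerivAt_prodMk_right s y)

theorem inner_fderiv_eq_zero_of_norm_eventuallyEq {G : Type*} [NormedAddCommGroup G]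
    [InnerProductSpace ℝ G] {f : X → G} {p : X} (hf : DifferentiableAt ℝ f p) {c : ℝ}
    (hc : ∀ᶠ q in 𝓝 p, ‖f q‖ = c) (v : X) : ⟪f p, fderiv ℝ f p v⟫ = 0 := by
  have hconst : (fun q => ‖f q‖ ^ 2) =ᶠ[𝓝 p] fun _ => c ^ 2 :=
    hc.mono fun _ hq => congrArg (· ^ 2) hq
  simpa using congrArg (· v) (hf.hasFDerivAt.norm_sq.fderiv.symm.trans hconst.fderiv_eq)

end Calculus

section PartialDerivatives

variable {F : Type*} [NormedAddCommGroup F] [NormedSpace ℝ F] {u : ℝ × E2 → F}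
  {n : WithTop ℕ∞}

theorem ContDiff.ptD (hu : ContDiff ℝ (n + 1) u) : ContDiff ℝ n (ptD u) :=
  (hu.fderiv_right le_rfl).clm_apply contDiff_const

theorem ContDiff.pxD (hu : ContDiff ℝ (n + 1) u) (i : Fin 2) : ContDiff ℝ n (pxD i u) :=
  (hu.fderiv_right le_rfl).clm_apply contDiff_const

theorem ptD_pxD_comm (hu : ContDiff ℝ 2 u) (i : Fin 2) (p : ℝ × E2) :
    ptD (pxD i u) p = pxD i (ptD u) p :=
  fderiv_fderiv_apply_comm hu p _ _

theorem DifferentiableAt.hasDerivAt_ptD {s : ℝ} {y : E2} (hu : DifferentiableAt ℝ u (s, y)) :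
    HasDerivAt (fun t => u (t, y)) (ptD u (s, y)) s :=
  hu.hasFDerivAt.comp_hasDerivAt s ((hasDerivAt_id s).prodMk (hasDerivAt_const s y))

end PartialDerivatives

section Weight

variable {y : E2}

theorem one_sub_norm_sq_pos (hy : ‖y‖ < 1) : 0 < 1 - ‖y‖ ^ 2 := by
  nlinarith [norm_nonneg y]

theorem rho_pos (hy : ‖y‖ < 1) : 0 < rho y :=
  Real.rpow_pos_of_pos (one_sub_norm_sq_pos hy) _

theorem rho_pow_three (hy : ‖y‖ < 1) : rho y ^ 3 = (1 - ‖y‖ ^ 2) ^ (-(3 / 2) : ℝ) := by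
  rw [rho, ← Real.rpow_mul_natCast (one_sub_norm_sq_pos hy).le]
  norm_num

theorem rho_sq_mul_one_sub_norm_sq (hy : ‖y‖ < 1) : rho y ^ 2 * (1 - ‖y‖ ^ 2) = 1 := by
  rw [rho, ← Real.rpow_mul_natCast (one_sub_norm_sq_pos hy).le]
  norm_num [Real.rpow_neg_one, (one_sub_norm_sq_pos hy).ne']

theorem hasFDerivAt_rho (hy : ‖y‖ < 1) : HasFDerivAt rho (rho y ^ 3 • innerSL ℝ y) y := by
  have hpow := Real.hasDerivAt_rpow_const (p := -(1 / 2)) (Or.inl (one_sub_norm_sq_pos hy).ne')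
  refine (hpow.comp_hasFDerivAt y
    ((hasFDerivAt_const 1 y).sub (hasStrictFDerivAt_norm_sq y).hasFDerivAt)).congr_fderiv ?_
  ext v
  rw [rho_pow_three hy]
  norm_num
  ring

theorem contDiffAt_rho {n : WithTop ℕ∞} (hy : ‖y‖ < 1) : ContDiffAt ℝ n rho y :=
  (Real.contDiffAt_rpow_const_of_ne (one_sub_norm_sq_pos hy).ne').comp y
    (contDiffAt_const.sub (contDiff_norm_sq ℝ).contDiffAt)

theorem continuousOn_rho : ContinuousOn rho (ball 0 1) := fun _ hy =>
  (contDiffAt_rho (n := 0) (mem_ball_zero_iff.1 hy)).continuousAt.continuousWithinAt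

end Weight

section Densities

variable {F : Type*} [NormedAddCommGroup F] [InnerProductSpace ℝ F] (u : ℝ × E2 → F)

def lyapDensity (s : ℝ) (y : E2) : ℝ :=
  (‖ptD u (s, y)‖ ^ 2 + ∑ i : Fin 2, ‖pxD i u (s, y)‖ ^ 2
    - ‖∑ i : Fin 2, y i • pxD i u (s, y)‖ ^ 2) * rho y

def lyapRate (s : ℝ) (y : E2) : ℝ :=
  (⟪ptD u (s, y), ptD (ptD u) (s, y)⟫ + ∑ i : Fin 2, ⟪pxD i u (s, y), pxD i (ptD u) (s, y)⟫
    - ⟪∑ i : Fin 2, y i • pxD i u (s, y), ∑ i : Fin 2, y i • pxD i (ptD u) (s, y)⟫) * rho y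

def PartialsVanish (p : ℝ × E2) : Prop :=
  ptD u p = 0 ∧ ∀ i : Fin 2, pxD i u p = 0

variable {u}

theorem lyapDensity_eq_zero {s : ℝ} {y : E2} (h : PartialsVanish u (s, y)) :
    lyapDensity u s y = 0 := by
  simp [lyapDensity, h.1, h.2]

theorem lyapRate_eq_zero {s : ℝ} {y : E2} (h : PartialsVanish u (s, y)) :
    lyapRate u s y = 0 := by
  simp [lyapRate, h.1, h.2]

theorem hasDerivAt_lyapDensity (hu : ContDiff ℝ 2 u) (s : ℝ) (y : E2) :
    HasDerivAt (fun t => lyapDensity u t y) (2 * lyapRate u s y) s := by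
  have hP : HasDerivAt (fun t => ptD u (t, y)) (ptD (ptD u) (s, y)) s :=
    ((hu.ptD (n := 1)).differentiable one_ne_zero _).hasDerivAt_ptD
  have hQ (i : Fin 2) : HasDerivAt (fun t => pxD i u (t, y)) (pxD i (ptD u) (s, y)) s := by
    rw [← ptD_pxD_comm hu]
    exact ((hu.pxD (n := 1) i).differentiable one_ne_zero _).hasDerivAt_ptD
  have hR : HasDerivAt (fun t => ∑ i : Fin 2, y i • pxD i u (t, y))
      (∑ i : Fin 2, y i • pxD i (ptD u) (s, y)) s :=
    HasDerivAt.fun_sum fun i _ => (hQ i).const_smul (y i)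
  refine (((hP.norm_sq.add (HasDerivAt.fun_sum fun i _ => (hQ i).norm_sq)).sub
    hR.norm_sq).mul_const (rho y)).congr_deriv ?_
  simp only [lyapRate, ← Finset.mul_sum]
  ring

theorem continuousOn_lyapDensity (hu : ContDiff ℝ 1 u) (s : ℝ) :
    ContinuousOn (lyapDensity u s) (ball 0 1) := by
  have hP : Continuous (ptD u) := (hu.ptD (n := 0)).continuous
  have hQ (i : Fin 2) : Continuous (pxD i u) := (hu.pxD (n := 0) i).continuous
  exact (by fun_prop : Continuous fun y : E2 => ‖ptD u (s, y)‖ ^ 2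
    + ∑ i : Fin 2, ‖pxD i u (s, y)‖ ^ 2 - ‖∑ i : Fin 2, y i • pxD i u (s, y)‖ ^ 2).continuousOn.mul
    continuousOn_rho

theorem continuousOn_lyapRate (hu : ContDiff ℝ 2 u) :
    ContinuousOn (fun p : ℝ × E2 => lyapRate u p.1 p.2) (univ ×ˢ ball 0 1) := by
  have hP : Continuous (ptD u) := (hu.ptD (n := 1)).continuous
  have hPt : Continuous (ptD (ptD u)) := ((hu.ptD (n := 1)).ptD (n := 0)).continuous
  have hQ (i : Fin 2) : Continuous (pxD i u) := (hu.pxD (n := 1) i).continuous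
  have hPx (i : Fin 2) : Continuous (pxD i (ptD u)) :=
    ((hu.ptD (n := 1)).pxD (n := 0) i).continuous
  exact (by fun_prop : Continuous fun p : ℝ × E2 => ⟪ptD u p, ptD (ptD u) p⟫
    + ∑ i : Fin 2, ⟪pxD i u p, pxD i (ptD u) p⟫
    - ⟪∑ i : Fin 2, p.2 i • pxD i u p, ∑ i : Fin 2, p.2 i • pxD i (ptD u) p⟫).continuousOn.mul
    (continuousOn_rho.comp continuous_snd.continuousOn fun _ hp => hp.2)

end Densities

section Current

variable {F : Type*} [NormedAddCommGroup F] [InnerProductSpace ℝ F] (u : ℝ × E2 → F)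

def divField (i : Fin 2) (q : ℝ × E2) : F :=
  rho q.2 • pxD i u q - (rho q.2 * q.2 i) • ∑ l : Fin 2, q.2 l • pxD l u q

def lyapCurrent (s : ℝ) (i : Fin 2) (y : E2) : ℝ :=
  ⟪divField u i (s, y) - (rho y * y i) • ptD u (s, y), ptD u (s, y)⟫

variable {u}

theorem differentiableAt_divField (hu : ContDiff ℝ 2 u) (i : Fin 2) {s : ℝ} {y : E2}
    (hy : ‖y‖ < 1) : DifferentiableAt ℝ (divField u i) (s, y) := by
  have hρ : DifferentiableAt ℝ rho y := (hasFDerivAt_rho hy).differentiableAt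
  have hQ (l : Fin 2) : Differentiable ℝ (pxD l u) :=
    (hu.pxD (n := 1) l).differentiable one_ne_zero
  unfold divField
  fun_prop

theorem contDiffAt_lyapCurrent (hu : ContDiff ℝ 2 u) (s : ℝ) (i : Fin 2) {y : E2}
    (hy : ‖y‖ < 1) : ContDiffAt ℝ 1 (lyapCurrent u s i) y := by
  have hρ : ContDiffAt ℝ 1 rho y := contDiffAt_rho hy
  have hP : ContDiff ℝ 1 (ptD u) := hu.ptD
  have hQ (l : Fin 2) : ContDiff ℝ 1 (pxD l u) := hu.pxD l
  unfold lyapCurrent divField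
  refine ContDiffAt.inner ℝ ?_ ?_ <;> fun_prop

theorem fderiv_lyapCurrent (hu : ContDiff ℝ 2 u) {s : ℝ} {y : E2} (hy : ‖y‖ < 1) (i : Fin 2) :
    fderiv ℝ (lyapCurrent u s i) y (EuclideanSpace.single i 1) =
      ⟪pxD i (divField u i) (s, y), ptD u (s, y)⟫ + ⟪divField u i (s, y), pxD i (ptD u) (s, y)⟫
        - (rho y + rho y ^ 3 * y i ^ 2) * ‖ptD u (s, y)‖ ^ 2
        - 2 * (rho y * y i) * ⟪pxD i (ptD u) (s, y), ptD u (s, y)⟫ := by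
  have hG := (differentiableAt_divField hu i (s := s) hy).hasFDerivAt_slice_snd
  have hP := ((hu.ptD (n := 1)).differentiable one_ne_zero (s, y)).hasFDerivAt_slice_snd
  have hc := (EuclideanSpace.proj i : E2 →L[ℝ] ℝ).hasFDerivAt (x := y)
  have hJ : HasFDerivAt (lyapCurrent u s i) _ y :=
    (hG.sub (((hasFDerivAt_rho hy).mul hc).smul hP)).inner ℝ hP
  have hb : fderiv ℝ (ptD u) (s, y) (0, EuclideanSpace.single i 1) = pxD i (ptD u) (s, y) := rfl
  have hdG : fderiv ℝ (divField u i) (s, y) (0, EuclideanSpace.single i 1) =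
    pxD i (divField u i) (s, y) := rfl
  rw [hJ.fderiv]
  simp only [EuclideanSpace.coe_proj, Pi.sub_apply, Pi.smul_apply', Pi.mul_apply,
    PiLp.proj_apply, ContinuousLinearMap.comp_apply, ContinuousLinearMap.prod_apply, sub_apply,
    ContinuousLinearMap.inr_apply, hdG, add_apply, smul_apply, hb,
    ContinuousLinearMap.smulRight_apply, PiLp.single_eq_same, smul_eq_mul, mul_one,
    coe_innerSL_apply, EuclideanSpace.inner_single_right, Real.ringHom_apply, one_mul,
    fderivInnerCLM_apply, inner_sub_left, inner_smul_left, real_inner_comm, inner_add_left,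
    inner_self_eq_norm_sq_to_K]
  ring

theorem lyapRate_eq_sum_fderiv_lyapCurrent_add (hu : ContDiff ℝ 2 u) {s : ℝ} {y : E2}
    (hy : ‖y‖ < 1) (horth : ⟪u (s, y), ptD u (s, y)⟫ = 0) (c : ℝ)
    (heq : ptD (ptD u) (s, y) = (rho y)⁻¹ • ∑ i : Fin 2, pxD i (divField u i) (s, y)
      - (2 : ℝ) • ∑ i : Fin 2, y i • pxD i (ptD u) (s, y) - ptD u (s, y) + c • u (s, y)) :
    lyapRate u s y =
      ∑ i : Fin 2, fderiv ℝ (lyapCurrent u s i) y (EuclideanSpace.single i 1)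
        + ‖ptD u (s, y)‖ ^ 2 * rho y ^ 3 := by
  have hEqP : ⟪ptD u (s, y), ptD (ptD u) (s, y)⟫ =
      (rho y)⁻¹ * ∑ i : Fin 2, ⟪pxD i (divField u i) (s, y), ptD u (s, y)⟫
        - 2 * ∑ i : Fin 2, y i * ⟪pxD i (ptD u) (s, y), ptD u (s, y)⟫ - ‖ptD u (s, y)‖ ^ 2 := by
    rw [real_inner_comm, heq]
    simp only [Fin.sum_univ_two, smul_add, inner_add_left, inner_sub_left, inner_smul_left,
      map_inv₀, Real.ringHom_apply, inner_self_eq_norm_sq_to_K, horth, mul_zero, add_zero]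
    ring
  have hG (i : Fin 2) : divField u i (s, y) =
      rho y • pxD i u (s, y) - (rho y * y i) • ∑ l : Fin 2, y l • pxD l u (s, y) := rfl
  have hy2 : ‖y‖ ^ 2 = y 0 ^ 2 + y 1 ^ 2 := by
    simp [EuclideanSpace.norm_sq_eq, Fin.sum_univ_two]
  simp only [lyapRate, Fin.sum_univ_two, fderiv_lyapCurrent hu hy, hG] at hEqP ⊢
  simp only [inner_add_left, inner_sub_left, inner_smul_left, inner_add_right, inner_smul_right,
    RCLike.conj_to_real] at hEqP ⊢
  linear_combination rho y * hEqP
    + (⟪pxD 0 (divField u 0) (s, y), ptD u (s, y)⟫ + ⟪pxD 1 (divField u 1) (s, y), ptD u (s, y)⟫)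
      * mul_inv_cancel₀ (rho_pos hy).ne'
    - rho y * ‖ptD u (s, y)‖ ^ 2 * rho_sq_mul_one_sub_norm_sq hy
    - rho y ^ 3 * ‖ptD u (s, y)‖ ^ 2 * hy2

end Current

section Integrated

variable {F : Type*} [NormedAddCommGroup F] [InnerProductSpace ℝ F] {u : ℝ × E2 → F}

theorem lyap_sub_eq_integral_lyapRate {m : ℕ} {ψf : ℝ × E2 → Em m} {s₁ s₂ r : ℝ}
    (hψ : ContDiff ℝ 2 ψf) (hr : r < 1) (h12 : s₁ ≤ s₂)
    (h0 : ∀ s ∈ Icc s₁ s₂, ∀ y : E2, r ≤ ‖y‖ → PartialsVanish ψf (s, y)) :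
    lyap m ψf s₂ - lyap m ψf s₁ = ∫ s in s₁..s₂, ∫ y in ball 0 1, lyapRate ψf s y := by
  have hL (s : ℝ) (hs : s ∈ Icc s₁ s₂) : IntegrableOn (lyapDensity ψf s) (ball 0 1) :=
    integrableOn_ball_of_continuousOn hr (continuousOn_lyapDensity (hψ.of_le one_le_two) s)
      fun y hy => lyapDensity_eq_zero (h0 s hs y hy)
  have hFTC (y : E2) (hy : y ∈ ball 0 1) : lyapDensity ψf s₂ y - lyapDensity ψf s₁ y =
      2 * ∫ s in Ioc s₁ s₂, lyapRate ψf s y := by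
    have hcont : Continuous fun s => lyapRate ψf s y :=
      (continuousOn_lyapRate hψ).comp_continuous (f := fun s => (s, y))
        (continuous_id.prodMk continuous_const) fun _ => ⟨trivial, hy⟩
    rw [← intervalIntegral.integral_of_le h12, ← intervalIntegral.integral_const_mul]
    exact (intervalIntegral.integral_eq_sub_of_hasDerivAt (fun s _ => hasDerivAt_lyapDensity hψ s y)
      ((continuous_const.mul hcont).intervalIntegrable _ _)).symm
  have hF : Integrable (Function.uncurry fun s y => lyapRate ψf s y)
      ((volume.restrict (Ioc s₁ s₂)).prod (volume.restrict (ball (0 : E2) 1))) := by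
    rw [Measure.prod_restrict]
    exact integrableOn_Ioc_prod_ball_of_continuousOn hr
      ((continuousOn_lyapRate hψ).mono (prod_mono (subset_univ _) subset_rfl))
      fun s hs y hy => lyapRate_eq_zero (h0 s hs y hy)
  calc lyap m ψf s₂ - lyap m ψf s₁
      = 1 / 2 * ∫ y in ball 0 1, (lyapDensity ψf s₂ y - lyapDensity ψf s₁ y) := by
        rw [integral_sub (hL s₂ ⟨h12, le_rfl⟩) (hL s₁ ⟨le_rfl, h12⟩), mul_sub]
        rfl
    _ = ∫ y in ball 0 1, ∫ s in Ioc s₁ s₂, lyapRate ψf s y := by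
        rw [setIntegral_congr_fun measurableSet_ball hFTC, integral_const_mul]
        ring
    _ = ∫ s in s₁..s₂, ∫ y in ball 0 1, lyapRate ψf s y := by
        rw [intervalIntegral.integral_of_le h12]
        exact (integral_integral_swap hF).symm

theorem integral_lyapRate_eq_integral_flux {s r : ℝ} (hu : ContDiff ℝ 2 u) (hr : r < 1)
    (h0 : ∀ y : E2, r ≤ ‖y‖ → ptD u (s, y) = 0)
    (horth : ∀ y ∈ ball (0 : E2) 1, ⟪u (s, y), ptD u (s, y)⟫ = 0)
    (heq : ∀ y ∈ ball (0 : E2) 1, ∃ c : ℝ,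
      ptD (ptD u) (s, y) = (rho y)⁻¹ • ∑ i : Fin 2, pxD i (divField u i) (s, y)
        - (2 : ℝ) • ∑ i : Fin 2, y i • pxD i (ptD u) (s, y) - ptD u (s, y) + c • u (s, y)) :
    ∫ y in ball 0 1, lyapRate u s y = ∫ y in ball 0 1, ‖ptD u (s, y)‖ ^ 2 * rho y ^ 3 := by
  have hJ0 (i : Fin 2) (y : E2) (hy : r ≤ ‖y‖) : lyapCurrent u s i y = 0 := by
    simp [lyapCurrent, h0 y hy]
  have hJ (i : Fin 2) : ContDiff ℝ 1 (lyapCurrent u s i) :=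
    contDiff_of_contDiffAt_of_eq_zero_of_le_norm hr
      (fun _ hy => contDiffAt_lyapCurrent hu s i hy) (hJ0 i)
  have hdivInt (i : Fin 2) :
      Integrable fun y => fderiv ℝ (lyapCurrent u s i) y (EuclideanSpace.single i 1) :=
    ((hJ i).continuous_fderiv_apply one_ne_zero).comp (continuous_id.prodMk continuous_const)
      |>.integrable_of_hasCompactSupport
      ((hasCompactSupport_of_eq_zero_of_le_norm (hJ0 i)).fderiv_apply (𝕜 := ℝ) _)
  have hdiv (i : Fin 2) :
      ∫ y in ball 0 1, fderiv ℝ (lyapCurrent u s i) y (EuclideanSpace.single i 1) = 0 := by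
    rw [setIntegral_eq_integral_of_forall_compl_eq_zero fun y hy => by
      rw [fderiv_eq_zero_of_lt_norm (hJ0 i) (hr.trans_le (by simpa using hy))]; rfl]
    exact integral_fderiv_apply_eq_zero (hJ i) (hasCompactSupport_of_eq_zero_of_le_norm (hJ0 i)) _
  have hP : Continuous (ptD u) := (hu.ptD (n := 1)).continuous
  have hflux : IntegrableOn (fun y => ‖ptD u (s, y)‖ ^ 2 * rho y ^ 3) (ball (0 : E2) 1) :=
    integrableOn_ball_of_continuousOn hr
      ((by fun_prop : Continuous fun y : E2 => ‖ptD u (s, y)‖ ^ 2).continuousOn.mul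
        (continuousOn_rho.pow 3)) fun y hy => by simp [h0 y hy]
  calc ∫ y in ball 0 1, lyapRate u s y
      = ∫ y in ball 0 1, (∑ i : Fin 2, fderiv ℝ (lyapCurrent u s i) y (EuclideanSpace.single i 1)
          + ‖ptD u (s, y)‖ ^ 2 * rho y ^ 3) :=
        setIntegral_congr_fun measurableSet_ball fun y hy =>
          let ⟨c, hc⟩ := heq y hy
          lyapRate_eq_sum_fderiv_lyapCurrent_add hu (mem_ball_zero_iff.1 hy) (horth y hy) c hc
    _ = ∫ y in ball 0 1, ‖ptD u (s, y)‖ ^ 2 * rho y ^ 3 := by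
        rw [integral_add (integrable_finsetSum _ fun i _ => (hdivInt i).integrableOn) hflux,
          integral_finsetSum _ fun i _ => (hdivInt i).integrableOn]
        simp [hdiv]

theorem fluxDen_eq_integral (m : ℕ) (ψf : ℝ × E2 → Em m) (s : ℝ) :
    fluxDen m ψf s = ∫ y in ball 0 1, ‖ptD ψf (s, y)‖ ^ 2 * rho y ^ 3 :=
  setIntegral_congr_fun measurableSet_ball fun y hy => by
    rw [rho_pow_three (mem_ball_zero_iff.1 hy)]

theorem fluxDen_nonneg (m : ℕ) (ψf : ℝ × E2 → Em m) (s : ℝ) : 0 ≤ fluxDen m ψf s := by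
  rw [fluxDen_eq_integral]
  exact setIntegral_nonneg measurableSet_ball fun y hy => by
    have := rho_pos (mem_ball_zero_iff.1 hy)
    positivity

end Integrated

theorem lyapunov_monotonicity_general (m : ℕ) (s₁ s₂ δ : ℝ) (h12 : s₁ < s₂)
    (hδ : 0 < δ) (ψf : ℝ × E2 → Em m) (hψ : ContDiff ℝ (⊤ : ℕ∞) ψf)
    (hsph : ∀ s ∈ Set.Icc s₁ s₂, ∀ y : E2, ‖y‖ ≤ 1 → ‖ψf (s, y)‖ = 1)
    (hsupp : ∀ s ∈ Set.Icc s₁ s₂, ∀ y : E2, 1 - δ ≤ ‖y‖ →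
      ptD ψf (s, y) = 0 ∧ ∀ i : Fin 2, pxD i ψf (s, y) = 0)
    (hEq : ∀ s ∈ Set.Icc s₁ s₂, ∀ y : E2, ‖y‖ < 1 →
      ptD (fun q => ptD ψf q) (s, y)
        = (rho y)⁻¹ •
            (∑ i : Fin 2, pxD i (fun q : ℝ × E2 =>
                rho q.2 • pxD i ψf q
                  - (rho q.2 * q.2 i) • ∑ l : Fin 2, q.2 l • pxD l ψf q) (s, y))
          - (2:ℝ) • (∑ i : Fin 2, y i • pxD i (fun q => ptD ψf q) (s, y))
          - ptD ψf (s, y)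
          + (‖ptD ψf (s, y) + ∑ i : Fin 2, y i • pxD i ψf (s, y)‖^2
              - ∑ i : Fin 2, ‖pxD i ψf (s, y)‖^2) • ψf (s, y)) :
    lyap m ψf s₂ - lyap m ψf s₁ = (∫ s in s₁..s₂, fluxDen m ψf s) ∧
    lyap m ψf s₁ ≤ lyap m ψf s₂ := by
  have hψ2 : ContDiff ℝ 2 ψf := hψ.of_le (by norm_cast)
  have hr : 1 - δ < 1 := by linarith
  have hrate (s : ℝ) (hs : s ∈ Ioo s₁ s₂) :
      ∫ y in ball 0 1, lyapRate ψf s y = fluxDen m ψf s := by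
    have hsIcc := Ioo_subset_Icc_self hs
    have horth (y : E2) (hy : y ∈ ball 0 1) : ⟪ψf (s, y), ptD ψf (s, y)⟫ = 0 :=
      have hS : Ioo s₁ s₂ ×ˢ ball (0 : E2) 1 ∈ 𝓝 (s, y) :=
        (isOpen_Ioo.prod isOpen_ball).mem_nhds ⟨hs, hy⟩
      inner_fderiv_eq_zero_of_norm_eventuallyEq (hψ2.differentiable two_ne_zero (s, y))
        (eventually_of_mem hS fun q hq =>
          hsph q.1 (Ioo_subset_Icc_self hq.1) q.2 (mem_ball_zero_iff.1 hq.2).le) (1, 0)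
    rw [fluxDen_eq_integral, integral_lyapRate_eq_integral_flux hψ2 hr
      (fun y hy => (hsupp s hsIcc y hy).1) horth
      fun y hy => ⟨_, hEq s hsIcc y (mem_ball_zero_iff.1 hy)⟩]
  have hdiff : lyap m ψf s₂ - lyap m ψf s₁ = ∫ s in s₁..s₂, fluxDen m ψf s := by
    rw [lyap_sub_eq_integral_lyapRate hψ2 hr h12.le hsupp, intervalIntegral.integral_of_le h12.le,
      intervalIntegral.integral_of_le h12.le, integral_Ioc_eq_integral_Ioo,
      integral_Ioc_eq_integral_Ioo]
    exact setIntegral_congr_fun measurableSet_Ioo hrate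
  exact ⟨hdiff, sub_nonneg.1 (hdiff ▸ intervalIntegral.integral_nonneg h12.le
    fun s _ => fluxDen_nonneg m ψf s)⟩

/-- monotonicity of the self-similar Lyapunov functional:
`Ẽ(s₂) − Ẽ(s₁) = ∫_{s₁}^{s₂}∫_{B₁} |∂_sψ|²(1−|y|²)^{−3/2} dy ds`; in particular `Ẽ` is
non-decreasing. -/
theorem lyapunov_monotonicity (m : ℕ) (s₁ s₂ δ : ℝ) (hs₁ : 0 ≤ s₁) (h12 : s₁ < s₂)
    (hδ : 0 < δ) (ψf : ℝ × E2 → Em m) (hψ : ContDiff ℝ (⊤ : ℕ∞) ψf)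
    (hsph : ∀ s ∈ Set.Icc s₁ s₂, ∀ y : E2, ‖y‖ ≤ 1 → ‖ψf (s, y)‖ = 1)
    (hsupp : ∀ s ∈ Set.Icc s₁ s₂, ∀ y : E2, 1 - δ ≤ ‖y‖ →
      ptD ψf (s, y) = 0 ∧ ∀ i : Fin 2, pxD i ψf (s, y) = 0)
    (hEq : ∀ s ∈ Set.Icc s₁ s₂, ∀ y : E2, ‖y‖ < 1 →
      ptD (fun q => ptD ψf q) (s, y)
        = (rho y)⁻¹ •
            (∑ i : Fin 2, pxD i (fun q : ℝ × E2 =>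
                rho q.2 • pxD i ψf q
                  - (rho q.2 * q.2 i) • ∑ l : Fin 2, q.2 l • pxD l ψf q) (s, y))
          - (2:ℝ) • (∑ i : Fin 2, y i • pxD i (fun q => ptD ψf q) (s, y))
          - ptD ψf (s, y)
          + (‖ptD ψf (s, y) + ∑ i : Fin 2, y i • pxD i ψf (s, y)‖^2
              - ∑ i : Fin 2, ‖pxD i ψf (s, y)‖^2) • ψf (s, y)) :
    lyap m ψf s₂ - lyap m ψf s₁ = (∫ s in s₁..s₂, fluxDen m ψf s) ∧
    lyap m ψf s₁ ≤ lyap m ψf s₂ :=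
  lyapunov_monotonicity_general m s₁ s₂ δ h12 hδ ψf hψ hsph hsupp hEq
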